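/- Fix x₀ ∈ ℝ^d, α > 2, M > 0, and let w(x) = M(R^{−α} − |x − x₀|^{−α}). Let 0 < λ ≤ Λ and suppose λ(α+2) − dΛ ≥ 1. Then the eigenvalues of D²w(x) are Mα(1 − (α+2))/|x−x₀|^{α+2} (simple, in direction x − x₀) and Mα/|x−x₀|^{α+2} (with multiplicity d−1), and for any (λ,Λ)-uniformly elliptic F with F(0)=0 one has F(D²w(x)) ≥ Mα/|x−x₀|^{α+2} for all x ≠ x₀. -/

import Mathlib

/-!
Writing `r = ‖x - x₀‖` and `u = x - x₀`, the Hessian is `c • 1 - t • u uᵀ` with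
`c = Mα / r^(α+2)` and `t r² = (α + 2) c`, which gives both eigenvector relations at once.
For the lower bound, `N = t • u uᵀ` is positive semidefinite with `N u = (α + 2) c • u` and
`D²w + N = c • 1`, so ellipticity gives `F(D²w) ≥ F(c • 1) + λ(α + 2)c`, while comparing `c • 1`
with `0` gives `F(c • 1) ≥ -Λc`. Hence `F(D²w) ≥ (λ(α + 2) - Λ) c ≥ (1 + (d - 1)Λ) c ≥ c`.
-/

open scoped RealInnerProductSpace

def UniformlyElliptic {d : ℕ} (lam Lam : ℝ) (F : Matrix (Fin d) (Fin d) ℝ → ℝ) : Prop :=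
  ∀ M N : Matrix (Fin d) (Fin d) ℝ, M.IsSymm → ∀ hN : N.PosSemidef,
    lam * (⨆ i, hN.1.eigenvalues i) ≤ F M - F (M + N) ∧
    F M - F (M + N) ≤ Lam * (⨆ i, hN.1.eigenvalues i)

/-- The Hessian matrix of the barrier `w(x) = M(R^{−α} − |x − x₀|^{−α})`:
`D²w(x) = Mα(I/|x−x₀|^{α+2} − (α+2)(x−x₀)⊗(x−x₀)/|x−x₀|^{α+4})`. -/
noncomputable def barrierHessian {d : ℕ} (x₀ : EuclideanSpace ℝ (Fin d)) (α M : ℝ)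
    (x : EuclideanSpace ℝ (Fin d)) : Matrix (Fin d) (Fin d) ℝ :=
  fun i j => M * α * ((if i = j then 1 else 0) / ‖x - x₀‖ ^ (α + 2)
    - (α + 2) * (x i - x₀ i) * (x j - x₀ j) / ‖x - x₀‖ ^ (α + 4))

open Matrix

namespace Matrix

variable {n : Type*} [Fintype n] [DecidableEq n]

theorem smul_one_sub_smul_vecMulVec_mulVec {R : Type*} [CommRing R] (c t : R) (u v : n → R) :
    (c • 1 - t • vecMulVec u u) *ᵥ v = c • v - (t * (u ⬝ᵥ v)) • u := by
  rw [sub_mulVec, smul_mulVec, one_mulVec, smul_mulVec, vecMulVec_mulVec, op_smul_eq_smul,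
    smul_smul]

theorem IsHermitian.le_iSup_eigenvalues {N : Matrix n n ℝ} (hN : N.IsHermitian) {u : n → ℝ}
    (hu : u ≠ 0) {s : ℝ} (hNu : N *ᵥ u = s • u) : s ≤ ⨆ i, hN.eigenvalues i := by
  have hs : s ∈ spectrum ℝ (toLin' N) :=
    Module.End.HasEigenvalue.mem_spectrum <| Module.End.hasEigenvalue_of_hasEigenvector
      (Module.End.hasEigenvector_iff.mpr ⟨Module.End.mem_eigenspace_iff.mpr hNu, hu⟩)
  rw [show toLin' N = toLinAlgEquiv' N from rfl, AlgEquiv.spectrum_eq,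
    hN.spectrum_real_eq_range_eigenvalues] at hs
  obtain ⟨i, rfl⟩ := hs
  exact le_ciSup (Set.finite_range _).bddAbove i

theorem iSup_eigenvalues_smul_one [Nonempty n] (c : ℝ)
    (h : (c • 1 : Matrix n n ℝ).IsHermitian) : ⨆ i, h.eigenvalues i = c := by
  have hrange : Set.range h.eigenvalues = {c} := by
    rw [← h.spectrum_real_eq_range_eigenvalues, ← Algebra.algebraMap_eq_smul_one,
      spectrum.scalar_eq]
  have hc (i : n) : h.eigenvalues i = c := hrange.subset ⟨i, rfl⟩
  simp only [hc, ciSup_const]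

end Matrix

namespace UniformlyElliptic

variable {d : ℕ} {lam Lam : ℝ} {F : Matrix (Fin d) (Fin d) ℝ → ℝ}

theorem mul_le_sub_of_mulVec_eq_smul (hF : UniformlyElliptic lam Lam F) (hlam : 0 ≤ lam)
    {A N : Matrix (Fin d) (Fin d) ℝ} (hA : A.IsSymm) (hN : N.PosSemidef) {u : Fin d → ℝ}
    (hu : u ≠ 0) {s : ℝ} (hNu : N *ᵥ u = s • u) : lam * s ≤ F A - F (A + N) :=
  (mul_le_mul_of_nonneg_left (hN.1.le_iSup_eigenvalues hu hNu) hlam).trans (hF A N hA hN).1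

theorem neg_mul_le_apply_smul_one [Nonempty (Fin d)] (hF : UniformlyElliptic lam Lam F)
    (hF0 : F 0 = 0) {c : ℝ} (hc : 0 ≤ c) : -(Lam * c) ≤ F (c • 1) := by
  have hcI : (c • 1 : Matrix (Fin d) (Fin d) ℝ).PosSemidef := PosSemidef.one.smul hc
  have h := (hF 0 (c • 1) isSymm_zero hcI).2
  rw [zero_add, hF0, iSup_eigenvalues_smul_one] at h
  linarith

theorem sub_le_apply_of_add_eq_smul_one [Nonempty (Fin d)] (hF : UniformlyElliptic lam Lam F)
    (hF0 : F 0 = 0) (hlam : 0 ≤ lam) {A N : Matrix (Fin d) (Fin d) ℝ} (hA : A.IsSymm)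
    (hN : N.PosSemidef) {c : ℝ} (hc : 0 ≤ c) (hAN : A + N = c • 1) {u : Fin d → ℝ}
    (hu : u ≠ 0) {s : ℝ} (hNu : N *ᵥ u = s • u) : lam * s - Lam * c ≤ F A := by
  have h₁ := hF.mul_le_sub_of_mulVec_eq_smul hlam hA hN hu hNu
  have h₂ := hF.neg_mul_le_apply_smul_one hF0 hc
  rw [hAN] at h₁
  linarith

end UniformlyElliptic

theorem EuclideanSpace.real_inner_eq_dotProduct {ι : Type*} [Fintype ι]
    (x y : EuclideanSpace ℝ ι) : ⟪x, y⟫ = x.ofLp ⬝ᵥ y.ofLp := by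
  rw [EuclideanSpace.inner_eq_star_dotProduct, star_trivial, dotProduct_comm]

section Barrier

variable {d : ℕ} {x₀ : EuclideanSpace ℝ (Fin d)} {α M : ℝ} {x : EuclideanSpace ℝ (Fin d)}

theorem barrierHessian_eq : barrierHessian x₀ α M x =
    (M * α / ‖x - x₀‖ ^ (α + 2)) • 1 -
      (M * α * (α + 2) / ‖x - x₀‖ ^ (α + 4)) • vecMulVec (x - x₀).ofLp (x - x₀).ofLp := by
  ext i j
  simp only [barrierHessian, Matrix.sub_apply, Matrix.smul_apply, one_apply, vecMulVec_apply,
    PiLp.sub_apply, smul_eq_mul]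
  split_ifs <;> ring

theorem barrierHessian_isSymm : (barrierHessian x₀ α M x).IsSymm := by
  rw [barrierHessian_eq]
  exact (isSymm_one.smul _).sub (IsSymm.smul (transpose_vecMulVec _ _) _)

theorem barrierHessian_mulVec (v : Fin d → ℝ) : barrierHessian x₀ α M x *ᵥ v =
    (M * α / ‖x - x₀‖ ^ (α + 2)) • v -
      (M * α * (α + 2) / ‖x - x₀‖ ^ (α + 4) * ((x - x₀).ofLp ⬝ᵥ v)) • (x - x₀).ofLp := by
  rw [barrierHessian_eq, smul_one_sub_smul_vecMulVec_mulVec]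

theorem barrierHessian_coeff_mul_dotProduct_self (hx : x ≠ x₀) :
    M * α * (α + 2) / ‖x - x₀‖ ^ (α + 4) * ((x - x₀).ofLp ⬝ᵥ (x - x₀).ofLp) =
      M * α / ‖x - x₀‖ ^ (α + 2) * (α + 2) := by
  have hr : 0 < ‖x - x₀‖ := norm_pos_iff.mpr (sub_ne_zero.mpr hx)
  rw [← EuclideanSpace.real_inner_eq_dotProduct, real_inner_self_eq_norm_sq,
    show α + 4 = (α + 2) + 2 by ring, Real.rpow_add hr, Real.rpow_two]
  field_simp

theorem barrierHessian_mulVec_self (hx : x ≠ x₀) :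
    barrierHessian x₀ α M x *ᵥ (x - x₀).ofLp =
      (M * α * (1 - (α + 2)) / ‖x - x₀‖ ^ (α + 2)) • (x - x₀).ofLp := by
  rw [barrierHessian_mulVec, barrierHessian_coeff_mul_dotProduct_self hx, ← sub_smul]
  congr 1
  ring

theorem barrierHessian_mulVec_of_inner_eq_zero {v : EuclideanSpace ℝ (Fin d)}
    (hv : ⟪x - x₀, v⟫ = 0) :
    barrierHessian x₀ α M x *ᵥ v.ofLp = (M * α / ‖x - x₀‖ ^ (α + 2)) • v.ofLp := by
  rw [barrierHessian_mulVec, ← EuclideanSpace.real_inner_eq_dotProduct, hv, mul_zero, zero_smul,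
    sub_zero]

theorem UniformlyElliptic.le_apply_barrierHessian {lam Lam : ℝ}
    {F : Matrix (Fin d) (Fin d) ℝ → ℝ} (hF : UniformlyElliptic lam Lam F) (hF0 : F 0 = 0)
    (hα : 2 < α) (hM : 0 < M) (hlam : 0 < lam) (hlL : lam ≤ Lam)
    (hell : lam * (α + 2) - d * Lam ≥ 1) (hx : x ≠ x₀) :
    M * α / ‖x - x₀‖ ^ (α + 2) ≤ F (barrierHessian x₀ α M x) := by
  set u := (x - x₀).ofLp
  set c := M * α / ‖x - x₀‖ ^ (α + 2)
  set t := M * α * (α + 2) / ‖x - x₀‖ ^ (α + 4)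
  have hu : u ≠ 0 := fun h => hx (sub_eq_zero.mp (WithLp.ofLp_injective 2 h))
  obtain ⟨i, -⟩ := Function.ne_iff.mp hu
  have : Nonempty (Fin d) := ⟨i⟩
  have hd : (1 : ℝ) ≤ d := by exact_mod_cast Fin.pos_iff_nonempty.mpr this
  have hr : 0 < ‖x - x₀‖ := norm_pos_iff.mpr (sub_ne_zero.mpr hx)
  have hc : 0 < c := by positivity
  have hN : (t • vecMulVec u u).PosSemidef := by
    simpa using (posSemidef_vecMulVec_self_star u).smul (by positivity : 0 ≤ t)
  have hNu : (t • vecMulVec u u) *ᵥ u = (c * (α + 2)) • u := by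
    rw [smul_mulVec, vecMulVec_mulVec, op_smul_eq_smul, smul_smul,
      barrierHessian_coeff_mul_dotProduct_self hx]
  have hAN : barrierHessian x₀ α M x + t • vecMulVec u u = c • 1 := by
    rw [barrierHessian_eq, sub_add_cancel]
  have key := hF.sub_le_apply_of_add_eq_smul_one hF0 hlam.le barrierHessian_isSymm hN hc.le hAN
    hu hNu
  nlinarith [mul_nonneg hc.le (sub_nonneg.mpr hell),
    mul_nonneg (mul_nonneg hc.le (sub_nonneg.mpr hd)) (hlam.le.trans hlL)]

end Barrier

theorem stmt_9 {d : ℕ} (x₀ : EuclideanSpace ℝ (Fin d)) (α M lam Lam : ℝ)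
    (hα : 2 < α) (hM : 0 < M) (hlam : 0 < lam) (hlL : lam ≤ Lam)
    (hell : lam * (α + 2) - d * Lam ≥ 1)
    (x : EuclideanSpace ℝ (Fin d)) (hx : x ≠ x₀) :
    (barrierHessian x₀ α M x).mulVec (fun i => x i - x₀ i) =
      (M * α * (1 - (α + 2)) / ‖x - x₀‖ ^ (α + 2)) • (fun i => x i - x₀ i) ∧
    (∀ v : EuclideanSpace ℝ (Fin d), ⟪x - x₀, v⟫ = 0 →
      (barrierHessian x₀ α M x).mulVec (fun i => v i) =
        (M * α / ‖x - x₀‖ ^ (α + 2)) • (fun i => v i)) ∧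
    ∀ F : Matrix (Fin d) (Fin d) ℝ → ℝ, F 0 = 0 → UniformlyElliptic lam Lam F →
      M * α / ‖x - x₀‖ ^ (α + 2) ≤ F (barrierHessian x₀ α M x) :=
  ⟨barrierHessian_mulVec_self hx, fun _ hv => barrierHessian_mulVec_of_inner_eq_zero hv,
    fun _ hF0 hF => hF.le_apply_barrierHessian hF0 hα hM hlam hlL hell hx⟩
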